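/- For Kronecker products of compatible matrices, if A_N D_M + (A_M D_N)ᵀ = E_R P_Rᵀ - E_L P_Lᵀ in one dimension (y) and B is symmetric in the other dimension (x), then (B ⊗ A_N)(I ⊗ D_M) + ((B ⊗ A_M)(I ⊗ D_N))ᵀ = (I ⊗ E_R)B(I ⊗ P_R)ᵀ - (I ⊗ E_L)B(I ⊗ P_L)ᵀ. -/
import Mathlib


open Matrix Kronecker

/-- Lifting a 1D SBP relation to 2D tensor-product operators: if
`A_N D_M + (A_M D_N)ᵀ = E_R P_Rᵀ - E_L P_Lᵀ` in the `y` direction and `B` is a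
symmetric norm matrix in the `x` direction, then
`(B ⊗ A_N)(I ⊗ D_M) + ((B ⊗ A_M)(I ⊗ D_N))ᵀ
  = (I ⊗ E_R) B (I ⊗ P_R)ᵀ - (I ⊗ E_L) B (I ⊗ P_L)ᵀ`
(where the middle `B` is interpreted as `B ⊗ I₁`). -/
theorem sbp_kronecker_lift
    {k n m : ℕ}
    (B : Matrix (Fin k) (Fin k) ℝ) (hB : B.IsSymm)
    (A_N : Matrix (Fin n) (Fin n) ℝ) (A_M : Matrix (Fin m) (Fin m) ℝ)
    (D_M : Matrix (Fin n) (Fin m) ℝ) (D_N : Matrix (Fin m) (Fin n) ℝ)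
    (E_R E_L : Matrix (Fin n) (Fin 1) ℝ) (P_R P_L : Matrix (Fin m) (Fin 1) ℝ)
    (hSBP : A_N * D_M + (A_M * D_N)ᵀ = E_R * P_Rᵀ - E_L * P_Lᵀ) :
    (B ⊗ₖ A_N) * ((1 : Matrix (Fin k) (Fin k) ℝ) ⊗ₖ D_M)
      + ((B ⊗ₖ A_M) * ((1 : Matrix (Fin k) (Fin k) ℝ) ⊗ₖ D_N))ᵀ
    = ((1 : Matrix (Fin k) (Fin k) ℝ) ⊗ₖ E_R)
        * (B ⊗ₖ (1 : Matrix (Fin 1) (Fin 1) ℝ))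
        * (((1 : Matrix (Fin k) (Fin k) ℝ) ⊗ₖ P_R))ᵀ
      - ((1 : Matrix (Fin k) (Fin k) ℝ) ⊗ₖ E_L)
        * (B ⊗ₖ (1 : Matrix (Fin 1) (Fin 1) ℝ))
        * (((1 : Matrix (Fin k) (Fin k) ℝ) ⊗ₖ P_L))ᵀ := by
  rw [← Matrix.mul_kronecker_mul, ← Matrix.mul_kronecker_mul,
    ← Matrix.kroneckerMap_transpose, ← Matrix.kroneckerMap_transpose,
    ← Matrix.kroneckerMap_transpose,
    ← Matrix.mul_kronecker_mul, ← Matrix.mul_kronecker_mul,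
    ← Matrix.mul_kronecker_mul, ← Matrix.mul_kronecker_mul]
  simp only [mul_one, one_mul, Matrix.transpose_one]
  rw [hB.eq, ← Matrix.kronecker_add, hSBP]
  ext i j
  simp [Matrix.kroneckerMap_apply, Matrix.sub_apply, mul_sub]
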